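/- Let m ≥ 0 and let R_a, R_b be nonempty words with |R_a| = f_m and |R_b| = f_{m−1}. For every integer i > f_m, writing the Zeckendorf representation Fib(i−1) = a_k a_{k−1} … a_1 a_0 (so k ≥ m), the i-th letter of F(R_a,R_b) equals the letter of the concatenation R_a R_b at position [a_m a_{m−1} … a_0]_F + 1; that is, F(R_a,R_b)[i] = (R_a R_b)[ Σ_{j=0}^{m} a_j f_j + 1 ]. -/
import Mathlib


/-- Fibonacci numbers: `fn 0 = 1`, `fn 1 = 2`, `fn (m+2) = fn (m+1) + fn m`
(so `fn m` is the paper's `f_m`; also `f_{m-1} = Nat.fib (m+1)` etc.). -/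
def fn (m : ℕ) : ℕ := Nat.fib (m + 2)

/-- Finite Fibonacci words `Fw m = σ^m(a)` for the morphism σ(a)=ab, σ(b)=a,
with `a := false`, `b := true`; equivalently `Fw (m+2) = Fw (m+1) ++ Fw m`. -/
def Fw : ℕ → List Bool
  | 0 => [false]
  | 1 => [false, true]
  | m + 2 => Fw (m + 1) ++ Fw m

/-- The infinite Fibonacci word (0-indexed): the fixed point of σ beginning with `a`. -/
def fibWord (i : ℕ) : Bool := (Fw (i + 1)).getD i false

/-- `fFactor i n = F[i;n]`, the factor of length `n` of the Fibonacci word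
beginning at (1-indexed) position `i`. -/
def fFactor (i n : ℕ) : List Bool := (List.range n).map fun t => fibWord (i - 1 + t)

/-- `w` occurs as a factor of the infinite Fibonacci word. -/
def IsFactorF (w : List Bool) : Prop := ∃ i : ℕ, 1 ≤ i ∧ w = fFactor i w.length

/-- `D2 i n`: the number of distinct squares occurring as factors of `F[i;n]`. -/
noncomputable def D2 (i n : ℕ) : ℕ :=
  {w : List Bool | w ≠ [] ∧ (w ++ w) <:+: fFactor i n}.ncard

/-- The first `N` blocks of `F(R_a,R_b)`: the Fibonacci word with each letter `a`
replaced by the block `R_a` and each `b` by `R_b`. -/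
def substBlocks {α : Type*} (Ra Rb : List α) (N : ℕ) : List α :=
  ((List.range N).map fun t => if fibWord t = false then Ra else Rb).flatten

/-- The `i`-th letter (0-indexed) of the infinite word `F(R_a,R_b)`,
with default `d` (irrelevant when `R_a`, `R_b` are nonempty). -/
def substLetter {α : Type*} (Ra Rb : List α) (d : α) (i : ℕ) : α :=
  (substBlocks Ra Rb (i + 1)).getD i d

/-! ### Auxiliary lemmas -/

lemma fn_zero : fn 0 = 1 := by decide
lemma fn_one : fn 1 = 2 := by decide

lemma fn_pos (m : ℕ) : 0 < fn m := Nat.fib_pos.2 (by omega)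

lemma fn_succ (m : ℕ) : fn (m + 1) = fn m + Nat.fib (m + 1) := by
  show Nat.fib (m + 3) = Nat.fib (m + 2) + Nat.fib (m + 1)
  rw [show m + 3 = (m + 1) + 2 by ring, Nat.fib_add_two]; ring

lemma fn_add_two (K : ℕ) : fn (K + 2) = fn (K + 1) + fn K := by
  show Nat.fib (K + 4) = _
  rw [show K + 4 = (K + 2) + 2 by ring, Nat.fib_add_two]
  simp [fn]; ring

lemma fn_strictMono : StrictMono fn := by
  apply strictMono_nat_of_lt_succ
  intro n
  exact Nat.fib_lt_fib_succ (by omega)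

lemma fn_ge (K : ℕ) : K + 1 ≤ fn K := by
  induction K using Nat.twoStepInduction with
  | zero => simp [fn_zero]
  | one => simp [fn_one]
  | more K ih ih1 => rw [fn_add_two]; omega

lemma zeck_lt (a : ℕ → ℕ) (h1 : ∀ j, a j ≤ 1) (hadj : ∀ j, a (j + 1) * a j = 0) :
    ∀ K, ∑ j ∈ Finset.range K, a j * fn j < fn K := by
  intro K
  induction K using Nat.twoStepInduction with
  | zero => simp [fn_pos]
  | one =>
    have := h1 0
    rw [Finset.sum_range_one, fn_zero, fn_one]; omega
  | more K ih ih1 =>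
    rcases Nat.le_one_iff_eq_zero_or_eq_one.1 (h1 (K + 1)) with h0 | h01
    · rw [Finset.sum_range_succ, h0, fn_add_two]
      have := fn_pos K
      simpa using by omega
    · have hK0 : a K = 0 := by have := hadj K; rw [h01] at this; omega
      rw [Finset.sum_range_succ, Finset.sum_range_succ, h01, hK0, fn_add_two]
      simpa using by omega

lemma Fw_length : ∀ K, (Fw K).length = fn K
  | 0 => by decide
  | 1 => by decide
  | (K + 2) => by
    rw [Fw, List.length_append, Fw_length (K + 1), Fw_length K, fn_add_two]

lemma Fw_prefix (K : ℕ) : Fw K <+: Fw (K + 1) := by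
  cases K with
  | zero => exact ⟨[true], rfl⟩
  | succ K => exact ⟨Fw K, rfl⟩

lemma Fw_prefix_le {K K' : ℕ} (h : K ≤ K') : Fw K <+: Fw K' := by
  induction K' with
  | zero => rw [Nat.le_zero.1 h]
  | succ K' ih =>
    rcases Nat.lt_or_ge K (K' + 1) with h' | h'
    · exact (ih (by omega)).trans (Fw_prefix K')
    · rw [show K = K' + 1 by omega]

lemma fibWord_getD (K t : ℕ) (ht : t < fn K) : fibWord t = (Fw K).getD t false := by
  unfold fibWord
  have htK : t < (Fw K).length := by rw [Fw_length]; exact ht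
  have ht1 : t < (Fw (t + 1)).length := by
    rw [Fw_length]; have := fn_ge (t + 1); omega
  rw [List.getD_eq_getElem _ _ htK, List.getD_eq_getElem _ _ ht1]
  rcases le_total K (t + 1) with h | h
  · exact ((Fw_prefix_le h).getElem htK).symm
  · exact (Fw_prefix_le h).getElem ht1

lemma fibWord_shift (K t : ℕ) (ht : t < fn K) :
    fibWord (fn (K + 1) + t) = fibWord t := by
  rw [fibWord_getD (K + 2) _ (by rw [fn_add_two]; omega)]
  show (Fw (K + 1) ++ Fw K).getD _ _ = _
  rw [List.getD_append_right _ _ _ _ (by rw [Fw_length]; omega)]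
  rw [Fw_length, Nat.add_sub_cancel_left]
  exact (fibWord_getD K t ht).symm

lemma substBlocks_add {α : Type*} (Ra Rb : List α) (N M : ℕ) :
    substBlocks Ra Rb (N + M) =
      substBlocks Ra Rb N ++
        ((List.range M).map fun t => if fibWord (N + t) = false then Ra else Rb).flatten := by
  unfold substBlocks
  rw [List.range_add, List.map_append, List.flatten_append, List.map_map]
  rfl

lemma substBlocks_fn_step {α : Type*} (Ra Rb : List α) (K : ℕ) :
    substBlocks Ra Rb (fn (K + 2)) =
      substBlocks Ra Rb (fn (K + 1)) ++ substBlocks Ra Rb (fn K) := by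
  rw [fn_add_two, substBlocks_add]
  congr 1
  unfold substBlocks
  congr 1
  apply List.map_congr_left
  intro t ht
  rw [List.mem_range] at ht
  rw [fibWord_shift K t ht]

lemma substBlocks_one {α : Type*} (Ra Rb : List α) :
    substBlocks Ra Rb 1 = Ra := by
  have h0 : fibWord 0 = false := by decide
  simp [substBlocks, List.range_succ, h0]

lemma substBlocks_two {α : Type*} (Ra Rb : List α) :
    substBlocks Ra Rb 2 = Ra ++ Rb := by
  have h0 : fibWord 0 = false := by decide
  have h1 : fibWord 1 = true := by decide
  simp [substBlocks, List.range_succ, h0, h1]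

lemma substBlocks_fn_length {α : Type*} (m : ℕ) (Ra Rb : List α)
    (hRa : Ra.length = fn m) (hRb : Rb.length = Nat.fib (m + 1)) :
    ∀ K, (substBlocks Ra Rb (fn K)).length = fn (K + m) := by
  intro K
  induction K using Nat.twoStepInduction with
  | zero => rw [fn_zero, substBlocks_one, hRa]; simp
  | one =>
    rw [fn_one, substBlocks_two, List.length_append, hRa, hRb,
      show 1 + m = m + 1 by ring, fn_succ]
  | more K ih ih1 =>
    rw [substBlocks_fn_step, List.length_append, ih, ih1,
      show K + 2 + m = (K + m) + 2 by ring, fn_add_two,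
      show K + 1 + m = K + m + 1 by ring]

lemma substBlocks_prefix {α : Type*} (Ra Rb : List α) {N N' : ℕ} (h : N ≤ N') :
    substBlocks Ra Rb N <+: substBlocks Ra Rb N' := by
  obtain ⟨M, rfl⟩ := Nat.exists_eq_add_of_le h
  rw [substBlocks_add]
  exact List.prefix_append _ _

lemma substBlocks_length_ge {α : Type*} (Ra Rb : List α)
    (hRa : Ra ≠ []) (hRb : Rb ≠ []) (N : ℕ) : N ≤ (substBlocks Ra Rb N).length := by
  induction N with
  | zero => simp
  | succ N ih =>
    rw [substBlocks_add, List.length_append]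
    have : 0 < (((List.range 1).map fun t =>
        if fibWord (N + t) = false then Ra else Rb).flatten).length := by
      simp only [List.range_succ, List.range_zero, List.nil_append, List.map_cons,
        List.map_nil, List.flatten, List.append_nil, List.length_pos_iff]
      split <;> simpa
    omega

lemma prefix_getD {α : Type*} {l1 l2 : List α} (h : l1 <+: l2) (n : ℕ)
    (hn : n < l1.length) (d : α) : l1.getD n d = l2.getD n d := by
  rw [List.getD_eq_getElem _ _ hn, List.getD_eq_getElem _ _ (hn.trans_le h.length_le)]
  exact h.getElem hn

lemma main_key {α : Type*} (m : ℕ) (Ra Rb : List α) (d : α)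
    (hRa : Ra.length = fn m) (hRb : Rb.length = Nat.fib (m + 1)) :
    ∀ K, ∀ a : ℕ → ℕ, (∀ j, a j ≤ 1) → (∀ j, a (j + 1) * a j = 0) →
      (∀ j, K + m ≤ j → a j = 0) →
      (substBlocks Ra Rb (fn K)).getD (∑ j ∈ Finset.range (K + m), a j * fn j) d =
        (Ra ++ Rb).getD (∑ j ∈ Finset.range (m + 1), a j * fn j) d := by
  intro K
  induction K using Nat.twoStepInduction with
  | zero =>
    intro a h1 hadj htop
    have ham : a m = 0 := htop m (by omega)
    have hsum : ∑ j ∈ Finset.range (m + 1), a j * fn j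
        = ∑ j ∈ Finset.range m, a j * fn j := by
      rw [Finset.sum_range_succ, ham]; ring
    have hlt : ∑ j ∈ Finset.range m, a j * fn j < fn m := zeck_lt a h1 hadj m
    rw [fn_zero, substBlocks_one, hsum, Nat.zero_add,
      List.getD_append _ _ _ _ (by rw [hRa]; exact hlt)]
  | one =>
    intro a h1 hadj htop
    rw [fn_one, substBlocks_two, show 1 + m = m + 1 by ring]
  | more K ih ih1 =>
    intro a h1 hadj htop
    rw [substBlocks_fn_step]
    have hlen1 : (substBlocks Ra Rb (fn (K + 1))).length = fn (K + 1 + m) :=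
      substBlocks_fn_length m Ra Rb hRa hRb (K + 1)
    rcases Nat.le_one_iff_eq_zero_or_eq_one.1 (h1 (K + 1 + m)) with h0 | h01
    · have e : K + 2 + m = (K + 1 + m) + 1 := by ring
      rw [e, Finset.sum_range_succ, h0, Nat.zero_mul, Nat.add_zero]
      have hlt : ∑ j ∈ Finset.range (K + 1 + m), a j * fn j < fn (K + 1 + m) :=
        zeck_lt a h1 hadj _
      rw [List.getD_append _ _ _ _ (by rw [hlen1]; exact hlt)]
      exact ih1 a h1 hadj (fun j hj => by
        rcases Nat.eq_or_lt_of_le hj with h | h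
        · rw [← h]; exact h0
        · exact htop j (by omega))
    · have haK : a (K + m) = 0 := by
        have := hadj (K + m)
        rw [show K + m + 1 = K + 1 + m by ring, h01] at this
        omega
      have e : ∑ j ∈ Finset.range (K + 2 + m), a j * fn j
          = fn (K + 1 + m) + ∑ j ∈ Finset.range (K + m), a j * fn j := by
        rw [show K + 2 + m = (K + m + 1) + 1 by ring, Finset.sum_range_succ,
          Finset.sum_range_succ, haK, show K + m + 1 = K + 1 + m by ring, h01]
        ring
      rw [e, List.getD_append_right _ _ _ _ (by rw [hlen1]; omega), hlen1,
        Nat.add_sub_cancel_left]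
      set a' : ℕ → ℕ := fun j => if j = K + 1 + m then 0 else a j with ha'
      have hs1 : ∑ j ∈ Finset.range (K + m), a j * fn j
          = ∑ j ∈ Finset.range (K + m), a' j * fn j := by
        apply Finset.sum_congr rfl
        intro j hj
        rw [Finset.mem_range] at hj
        simp only [ha']
        rw [if_neg (by omega)]
      have hs2 : ∑ j ∈ Finset.range (m + 1), a j * fn j
          = ∑ j ∈ Finset.range (m + 1), a' j * fn j := by
        apply Finset.sum_congr rfl
        intro j hj
        rw [Finset.mem_range] at hj
        simp only [ha']
        rw [if_neg (by omega)]
      rw [hs1, hs2]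
      apply ih a'
      · intro j; simp only [ha']; split
        · omega
        · exact h1 j
      · intro j; simp only [ha']
        split
        · simp
        · split
          · simp
          · exact hadj j
      · intro j hj
        simp only [ha']
        split
        · rfl
        · rcases Nat.eq_or_lt_of_le hj with h | h
          · rw [← h]; exact haK
          · exact htop j (by omega)

/-- For `i > f_m`, with `Fib(i-1) = a_k … a_0` the Zeckendorf representation of `i-1`,
the `i`-th letter of `F(R_a,R_b)` (`|R_a| = f_m`, `|R_b| = f_{m-1}`) is the letter of
`R_a R_b` at (1-indexed) position `[a_m … a_0]_F + 1`; moreover `k ≥ m`. -/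
theorem letter_of_subst_word_via_zeckendorf {α : Type*} (m : ℕ) (Ra Rb : List α) (d : α)
    (hRa : Ra.length = fn m) (hRb : Rb.length = Nat.fib (m + 1))
    (i : ℕ) (hi : fn m < i)
    (k : ℕ) (a : ℕ → ℕ)
    (hdig : ∀ j, a j ≤ 1) (hak : a k = 1) (htop : ∀ j, k < j → a j = 0)
    (hadj : ∀ j, a (j + 1) * a j = 0)
    (hsum : i - 1 = ∑ j ∈ Finset.range (k + 1), a j * fn j) :
    m ≤ k ∧
    substLetter Ra Rb d (i - 1) =
      (Ra ++ Rb).getD (∑ j ∈ Finset.range (m + 1), a j * fn j) d := by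
  have h2 : i - 1 < fn (k + 1) := by
    rw [hsum]; exact zeck_lt a hdig hadj (k + 1)
  have hk : m ≤ k := by
    by_contra h
    push_neg at h
    have hmono := fn_strictMono.le_iff_le.2 (show k + 1 ≤ m by omega)
    omega
  refine ⟨hk, ?_⟩
  set n := i - 1 with hn
  have hK : (k + 1 - m) + m = k + 1 := by omega
  have key := main_key m Ra Rb d hRa hRb (k + 1 - m) a hdig hadj
    (fun j hj => htop j (by omega))
  rw [hK, ← hsum] at key
  have hRane : Ra ≠ [] := by
    intro h; rw [h] at hRa; have := fn_pos m; simp at hRa; omega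
  have hRbne : Rb ≠ [] := by
    intro h; rw [h] at hRb
    have : 0 < Nat.fib (m + 1) := Nat.fib_pos.2 (by omega)
    simp at hRb; omega
  have hlen1 : n < (substBlocks Ra Rb (n + 1)).length :=
    lt_of_lt_of_le (Nat.lt_succ_self n) (substBlocks_length_ge Ra Rb hRane hRbne (n + 1))
  have hlen2 : n < (substBlocks Ra Rb (fn (k + 1 - m))).length := by
    rw [substBlocks_fn_length m Ra Rb hRa hRb, hK]; exact h2
  unfold substLetter
  rcases le_total (n + 1) (fn (k + 1 - m)) with h | h
  · rw [prefix_getD (substBlocks_prefix Ra Rb h) n hlen1 d]; exact key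
  · rw [← prefix_getD (substBlocks_prefix Ra Rb h) n hlen2 d]; exact key
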